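/- arXiv:2105.09836 — 2 statements merged into one kernel-verified Lean document; each statement's English description precedes it below -/
import Mathlib

section
/- The density band model equals a constrained ε-contamination model: with ε = 1 − ∫ p' dμ and nominal density p°(x) = p'(x)/(1−ε), the set {P : p' ≤ dP/dμ ≤ p''} of probability measures coincides with the set {P : dP/dμ = (1−ε) p° + ε h, where h ≥ 0, ∫ h dμ = 1, and ε h(x) ≤ p''(x) − p'(x) for all x}. -/
open MeasureTheory

/-- the density band model equals a constrained ε-contamination
model: with ε = 1 − ∫ p' dμ and nominal density p° = p'/(1−ε), a probability
density p satisfies p' ≤ p ≤ p'' iff p = (1−ε)p° + ε h for some density h ≥ 0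
with ∫ h dμ = 1 and ε h ≤ p'' − p' pointwise. -/
theorem stmt_12 {α : Type*} [MeasurableSpace α] (μ : Measure α)
    (p' p'' : α → ℝ)
    (hp'meas : Measurable p') (hp''meas : Measurable p'')
    (hp'nonneg : ∀ x, 0 ≤ p' x) (hband : ∀ x, p' x ≤ p'' x)
    (hp'int : Integrable p' μ) (hp''int : Integrable p'' μ)
    (hp'lt : ∫ x, p' x ∂μ < 1) (hp''ge : 1 ≤ ∫ x, p'' x ∂μ)
    (ε : ℝ) (hε : ε = 1 - ∫ x, p' x ∂μ) (hεlt : ε < 1)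
    (pnom : α → ℝ) (hpnom : ∀ x, pnom x = p' x / (1 - ε))
    (p : α → ℝ) (hpmeas : Measurable p) (hpnonneg : ∀ x, 0 ≤ p x)
    (hpint : Integrable p μ) (hpprob : ∫ x, p x ∂μ = 1) :
    (∀ x, p' x ≤ p x ∧ p x ≤ p'' x) ↔
      ∃ h : α → ℝ, Measurable h ∧ (∀ x, 0 ≤ h x) ∧ Integrable h μ ∧
        (∫ x, h x ∂μ = 1) ∧
        (∀ x, p x = (1 - ε) * pnom x + ε * h x) ∧
        (∀ x, ε * h x ≤ p'' x - p' x) := by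

  have hεpos : 0 < ε := by rw [hε]; linarith
  have hεne : ε ≠ 0 := ne_of_gt hεpos
  have h1ε : (1 : ℝ) - ε ≠ 0 := by linarith
  constructor
  · intro hb
    refine ⟨fun x => (p x - p' x) / ε, (hpmeas.sub hp'meas).div_const ε,
      fun x => div_nonneg (by linarith [(hb x).1]) hεpos.le,
      (hpint.sub hp'int).div_const ε, ?_, fun x => ?_, fun x => ?_⟩
    · rw [integral_div, integral_sub hpint hp'int, hpprob]
      have hne : (1 : ℝ) - ∫ x, p' x ∂μ ≠ 0 := by linarith
      rw [hε]; exact div_self hne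
    · rw [hpnom]
      field_simp
      ring
    · rw [mul_div_cancel₀ _ hεne]
      linarith [(hb x).2]
  · rintro ⟨h, _, hnn, _, _, heq, hle⟩ x
    have this : p x = p' x + ε * h x := by
      rw [heq x, hpnom]; field_simp
    constructor
    · nlinarith [hnn x, mul_nonneg hεpos.le (hnn x)]
    · nlinarith [hle x]
end

section
/- Under density-band uncertainty, the least favorable likelihood ratio takes at most six values: if q0(x) = min{p0''(x), max{c0 q1(x), p0'(x)}} and q1(x) = min{p1''(x), max{c1 q0(x), p1'(x)}} pointwise for constants c0, c1 > 0 with c0 c1 < 1, then for μ-a.e. x, the ratio q1(x)/q0(x) belongs to the set {p1'(x)/p0'(x), p1''(x)/p0'(x), p1'(x)/p0''(x), p1''(x)/p0''(x), 1/c0, c1}. -/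
open MeasureTheory

/-- under density-band uncertainty the least favorable likelihood
ratio takes at most six values: if q0 = min{p0'', max{c0 q1, p0'}} and
q1 = min{p1'', max{c1 q0, p1'}} pointwise with c0, c1 > 0 and c0 c1 < 1, then
μ-a.e. the ratio q1/q0 lies in
{p1'/p0', p1''/p0', p1'/p0'', p1''/p0'', 1/c0, c1}. -/
theorem stmt_17 {α : Type*} [MeasurableSpace α] (μ : Measure α)
    (p0' p0'' p1' p1'' q0 q1 : α → ℝ)
    (h0nonneg : ∀ x, 0 ≤ p0' x) (h1nonneg : ∀ x, 0 ≤ p1' x)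
    (h0band : ∀ x, p0' x ≤ p0'' x) (h1band : ∀ x, p1' x ≤ p1'' x)
    (hq0pos : ∀ x, 0 < q0 x) (hq1pos : ∀ x, 0 < q1 x)
    (c0 c1 : ℝ) (hc0 : 0 < c0) (hc1 : 0 < c1) (hcc : c0 * c1 < 1)
    (hq0 : ∀ x, q0 x = min (p0'' x) (max (c0 * q1 x) (p0' x)))
    (hq1 : ∀ x, q1 x = min (p1'' x) (max (c1 * q0 x) (p1' x))) :
    ∀ᵐ x ∂μ, q1 x / q0 x ∈
      ({p1' x / p0' x, p1'' x / p0' x, p1' x / p0'' x, p1'' x / p0'' x,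
        1 / c0, c1} : Set ℝ) := by
  refine Filter.Eventually.of_forall fun x => ?_
  have hq0x := hq0pos x
  have hq1x := hq1pos x
  have H0 : q0 x = p0'' x ∨ q0 x = c0 * q1 x ∨ q0 x = p0' x := by
    rcases min_cases (p0'' x) (max (c0 * q1 x) (p0' x)) with ⟨h, _⟩ | ⟨h, _⟩
    · left; rw [hq0 x, h]
    · rcases max_cases (c0 * q1 x) (p0' x) with ⟨h2, _⟩ | ⟨h2, _⟩
      · right; left; rw [hq0 x, h, h2]
      · right; right; rw [hq0 x, h, h2]
  have H1 : q1 x = p1'' x ∨ q1 x = c1 * q0 x ∨ q1 x = p1' x := by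
    rcases min_cases (p1'' x) (max (c1 * q0 x) (p1' x)) with ⟨h, _⟩ | ⟨h, _⟩
    · left; rw [hq1 x, h]
    · rcases max_cases (c1 * q0 x) (p1' x) with ⟨h2, _⟩ | ⟨h2, _⟩
      · right; left; rw [hq1 x, h, h2]
      · right; right; rw [hq1 x, h, h2]
  simp only [Set.mem_insert_iff, Set.mem_singleton_iff]
  rcases H0 with h0e | h0e | h0e <;> rcases H1 with h1e | h1e | h1e
  · exact Or.inr (Or.inr (Or.inr (Or.inl (by rw [h0e, h1e]))))
  · refine Or.inr (Or.inr (Or.inr (Or.inr (Or.inr ?_))))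
    rw [h1e, mul_div_assoc, div_self hq0x.ne', mul_one]
  · exact Or.inr (Or.inr (Or.inl (by rw [h0e, h1e])))
  · refine Or.inr (Or.inr (Or.inr (Or.inr (Or.inl ?_))))
    rw [h0e]; field_simp
  · exfalso
    rw [h1e] at h0e
    nlinarith [h0e, hq0x]
  · refine Or.inr (Or.inr (Or.inr (Or.inr (Or.inl ?_))))
    rw [h0e]; field_simp
  · exact Or.inr (Or.inl (by rw [h0e, h1e]))
  · refine Or.inr (Or.inr (Or.inr (Or.inr (Or.inr ?_))))
    rw [h1e, mul_div_assoc, div_self hq0x.ne', mul_one]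
  · exact Or.inl (by rw [h0e, h1e])
end
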